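/- Let Y = Gr(2,5) ∩ {p_{12}=p_{03}} ∩ {p_{13}=p_{24}} ∩ {p_{14}=p_{02}} be the Fano 3-fold of degree 5. Then Y contains no planes; equivalently, no σ_{3,1}-plane and no σ_{2,2}-plane of Gr(2,5) is contained in the intersection of these three hyperplanes. -/
import Mathlib


/-- The skew form corresponding to `p₁₂ - p₀₃`. -/
def Om (a b : Fin 5 → ℂ) : ℂ :=
  (a 1 * b 2 - a 2 * b 1) - (a 0 * b 3 - a 3 * b 0)

/-- The skew form corresponding to `p₁₃ - p₂₄`. -/
def Om' (a b : Fin 5 → ℂ) : ℂ :=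
  (a 1 * b 3 - a 3 * b 1) - (a 2 * b 4 - a 4 * b 2)

/-- The skew form corresponding to `p₁₄ - p₀₂`. -/
def Om'' (a b : Fin 5 → ℂ) : ℂ :=
  (a 1 * b 4 - a 4 * b 1) - (a 0 * b 2 - a 2 * b 0)

/-- Total isotropy of a subspace. -/
def IsIsotropic (f : (Fin 5 → ℂ) → (Fin 5 → ℂ) → ℂ) (W : Submodule ℂ (Fin 5 → ℂ)) : Prop :=
  ∀ a ∈ W, ∀ b ∈ W, f a b = 0

noncomputable def OmL : (Fin 5 → ℂ) →ₗ[ℂ] Module.Dual ℂ (Fin 5 → ℂ) :=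
  LinearMap.mk₂ ℂ Om
    (by intro m₁ m₂ n; simp [Om]; ring)
    (by intro c m n; simp [Om]; ring)
    (by intro m n₁ n₂; simp [Om]; ring)
    (by intro c m n; simp [Om]; ring)

noncomputable def OmL' : (Fin 5 → ℂ) →ₗ[ℂ] Module.Dual ℂ (Fin 5 → ℂ) :=
  LinearMap.mk₂ ℂ Om'
    (by intro m₁ m₂ n; simp [Om']; ring)
    (by intro c m n; simp [Om']; ring)
    (by intro m n₁ n₂; simp [Om']; ring)
    (by intro c m n; simp [Om']; ring)

noncomputable def OmL'' : (Fin 5 → ℂ) →ₗ[ℂ] Module.Dual ℂ (Fin 5 → ℂ) :=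
  LinearMap.mk₂ ℂ Om''
    (by intro m₁ m₂ n; simp [Om'']; ring)
    (by intro c m n; simp [Om'']; ring)
    (by intro m n₁ n₂; simp [Om'']; ring)
    (by intro c m n; simp [Om'']; ring)

/-- rank of 5-dim ambient space -/
lemma ambient_rank : Module.finrank ℂ (Fin 5 → ℂ) = 5 := by simp

/-- dimension of a sup with a span of a vector not in `V`. -/
lemma finrank_sup_span (V : Submodule ℂ (Fin 5 → ℂ)) (r : Fin 5 → ℂ)
    (hrV : r ∉ V) :
    Module.finrank ℂ ↥(V ⊔ Submodule.span ℂ {r}) = Module.finrank ℂ V + 1 := by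
  have hr0 : r ≠ 0 := fun h => hrV (h ▸ V.zero_mem)
  have hinf : V ⊓ Submodule.span ℂ {r} = ⊥ := by
    rw [eq_bot_iff]
    rintro x ⟨hxV, hxr⟩
    obtain ⟨c, rfl⟩ := Submodule.mem_span_singleton.1 hxr
    rcases eq_or_ne c 0 with rfl | hc
    · simp
    · exact absurd (by simpa [hc] using V.smul_mem c⁻¹ hxV) hrV
  have := Submodule.finrank_sup_add_finrank_inf_eq V (Submodule.span ℂ {r})
  rw [hinf] at this
  simp only [finrank_bot, add_zero] at this
  rw [this, finrank_span_singleton hr0]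

/-- the dual annihilator of a 4-dim subspace has dimension 1. -/
lemma ann_rank (W : Submodule ℂ (Fin 5 → ℂ)) (h4 : Module.finrank ℂ W = 4) :
    Module.finrank ℂ W.dualAnnihilator = 1 := by
  have h1 := LinearEquiv.finrank_eq (Subspace.quotEquivAnnihilator W)
  have h2 := Submodule.finrank_quotient_add_finrank W
  rw [ambient_rank, h4] at h2
  omega

/-- two elements of a 1-dim subspace of the dual have vanishing "minors". -/
lemma minor_eq (p : Submodule ℂ (Module.Dual ℂ (Fin 5 → ℂ)))
    (hp : Module.finrank ℂ p ≤ 1) {x y : Module.Dual ℂ (Fin 5 → ℂ)}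
    (hx : x ∈ p) (hy : y ∈ p) (a b : Fin 5 → ℂ) :
    x a * y b = x b * y a := by
  obtain ⟨v, hv⟩ := (finrank_le_one_iff (K := ℂ) (V := p)).1 hp
  obtain ⟨c, hc⟩ := hv ⟨x, hx⟩
  obtain ⟨d, hd⟩ := hv ⟨y, hy⟩
  have hc' : x = c • (v : Module.Dual ℂ (Fin 5 → ℂ)) := by
    simpa using congrArg Subtype.val hc.symm
  have hd' : y = d • (v : Module.Dual ℂ (Fin 5 → ℂ)) := by
    simpa using congrArg Subtype.val hd.symm
  rw [hc', hd']
  simp [smul_eq_mul]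
  ring

/-- no 4-dimensional isotropic subspace if the left kernel is ≤ 1-dimensional. -/
lemma no_iso4 (B : (Fin 5 → ℂ) →ₗ[ℂ] Module.Dual ℂ (Fin 5 → ℂ)) (r : Fin 5 → ℂ)
    (hker : ∀ a, B a = 0 → a ∈ Submodule.span ℂ {r})
    (W : Submodule ℂ (Fin 5 → ℂ)) (hW : Module.finrank ℂ W = 4)
    (hiso : ∀ a ∈ W, ∀ b ∈ W, B a b = 0) : False := by
  set F := B.domRestrict W with hF
  have hrange : LinearMap.range F ≤ W.dualAnnihilator := by
    rintro φ ⟨⟨x, hx⟩, rfl⟩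
    rw [Submodule.mem_dualAnnihilator]
    intro w hw
    exact hiso x hx w hw
  have h1 : Module.finrank ℂ (LinearMap.range F) ≤ 1 := by
    have := Submodule.finrank_mono hrange
    rw [ann_rank W hW] at this
    exact this
  have hker' : Module.finrank ℂ (LinearMap.ker F) ≤ 1 := by
    have hmap : (LinearMap.ker F).map W.subtype ≤ Submodule.span ℂ {r} := by
      rintro x ⟨⟨y, hy⟩, hky, rfl⟩
      exact hker y (by simpa [hF] using hky)
    have := Submodule.finrank_mono hmap
    rw [Submodule.finrank_map_subtype_eq] at this
    calc Module.finrank ℂ (LinearMap.ker F) ≤ Module.finrank ℂ (Submodule.span ℂ {r}) := this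
      _ ≤ 1 := by
        rcases eq_or_ne r 0 with rfl | hr
        · rw [Submodule.span_zero_singleton]; simp
        · rw [finrank_span_singleton hr]
  have := LinearMap.finrank_range_add_finrank_ker F
  rw [hW] at this
  omega

/-- the radical vector of each form belongs to any 3-dim isotropic subspace. -/
lemma radical_mem (B : (Fin 5 → ℂ) →ₗ[ℂ] Module.Dual ℂ (Fin 5 → ℂ)) (r : Fin 5 → ℂ)
    (hBr : B r = 0) (hrB : ∀ a, B a r = 0)
    (hker : ∀ a, B a = 0 → a ∈ Submodule.span ℂ {r})
    (V : Submodule ℂ (Fin 5 → ℂ)) (hV : Module.finrank ℂ V = 3)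
    (hiso : ∀ a ∈ V, ∀ b ∈ V, B a b = 0) : r ∈ V := by
  by_contra hrV
  set W := V ⊔ Submodule.span ℂ {r} with hWdef
  have hW4 : Module.finrank ℂ W = 4 := by
    rw [hWdef, finrank_sup_span V r hrV, hV]
  refine no_iso4 B r hker W hW4 ?_
  intro a ha b hb
  obtain ⟨x, hx, z, hz, rfl⟩ := Submodule.mem_sup.1 ha
  obtain ⟨y, hy, z', hz', rfl⟩ := Submodule.mem_sup.1 hb
  obtain ⟨c, rfl⟩ := Submodule.mem_span_singleton.1 hz
  obtain ⟨d, rfl⟩ := Submodule.mem_span_singleton.1 hz'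
  simp only [map_add, map_smul, LinearMap.add_apply, LinearMap.smul_apply, hBr,
    LinearMap.zero_apply, smul_zero, add_zero, hiso x hx y hy, hrB, smul_eq_mul]
  simp [hiso x hx y hy, hrB]

@[simp] lemma OmL_apply (a b : Fin 5 → ℂ) : OmL a b = Om a b := rfl
@[simp] lemma OmL'_apply (a b : Fin 5 → ℂ) : OmL' a b = Om' a b := rfl
@[simp] lemma OmL''_apply (a b : Fin 5 → ℂ) : OmL'' a b = Om'' a b := rfl

/-- The Fano 3-fold `Y = Gr(2,5) ∩ {p₁₂=p₀₃} ∩ {p₁₃=p₂₄} ∩ {p₁₄=p₀₂}` contains no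
planes: there is no `σ_{3,1}`-plane (flag `V₁ ⊂ V₄`, all 2-planes `W` with
`V₁ ≤ W ≤ V₄` satisfying the three Plücker relations) and no `σ_{2,2}`-plane
(3-space `V₃` totally isotropic for all three forms). -/
theorem stmt19 :
    (¬ ∃ V₁ V₄ : Submodule ℂ (Fin 5 → ℂ),
        Module.finrank ℂ V₁ = 1 ∧ Module.finrank ℂ V₄ = 4 ∧ V₁ ≤ V₄ ∧
        ∀ W : Submodule ℂ (Fin 5 → ℂ), V₁ ≤ W → W ≤ V₄ → Module.finrank ℂ W = 2 →
          (IsIsotropic Om W ∧ IsIsotropic Om' W ∧ IsIsotropic Om'' W)) ∧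
    (¬ ∃ V₃ : Submodule ℂ (Fin 5 → ℂ), Module.finrank ℂ V₃ = 3 ∧
        IsIsotropic Om V₃ ∧ IsIsotropic Om' V₃ ∧ IsIsotropic Om'' V₃) := by
  constructor
  · rintro ⟨V₁, V₄, h1, h4, hle, hW⟩
    rw [finrank_eq_one_iff'] at h1
    obtain ⟨v, hv0, hvall⟩ := h1
    set v₀ : Fin 5 → ℂ := (v : Fin 5 → ℂ) with hv₀def
    have hv₀ : v₀ ≠ 0 := fun h => hv0 (by exact_mod_cast Subtype.ext h)
    have hV₁le : V₁ ≤ Submodule.span ℂ {v₀} := by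
      intro x hx
      obtain ⟨c, hc⟩ := hvall ⟨x, hx⟩
      exact Submodule.mem_span_singleton.2 ⟨c, by simpa using congrArg Subtype.val hc⟩
    have hv₀4 : v₀ ∈ V₄ := hle v.2
    have key : ∀ w ∈ V₄, Om v₀ w = 0 ∧ Om' v₀ w = 0 ∧ Om'' v₀ w = 0 := by
      intro w hw
      by_cases hws : w ∈ Submodule.span ℂ {v₀}
      · obtain ⟨c, rfl⟩ := Submodule.mem_span_singleton.1 hws
        refine ⟨?_, ?_, ?_⟩ <;> (simp [Om, Om', Om'', Pi.smul_apply, smul_eq_mul]; ring)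
      · set W := Submodule.span ℂ {v₀} ⊔ Submodule.span ℂ {w} with hWdef
        have hrank : Module.finrank ℂ W = 2 := by
          rw [hWdef, finrank_sup_span _ w hws, finrank_span_singleton hv₀]
        have hWle : W ≤ V₄ := sup_le
          ((Submodule.span_le).2 (Set.singleton_subset_iff.2 hv₀4))
          ((Submodule.span_le).2 (Set.singleton_subset_iff.2 hw))
        have hV₁W : V₁ ≤ W := hV₁le.trans le_sup_left
        obtain ⟨hA, hB, hC⟩ := hW W hV₁W hWle hrank
        have hvW : v₀ ∈ W := Submodule.mem_sup_left (Submodule.mem_span_singleton_self v₀)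
        have hwW : w ∈ W := Submodule.mem_sup_right (Submodule.mem_span_singleton_self w)
        exact ⟨hA v₀ hvW w hwW, hB v₀ hvW w hwW, hC v₀ hvW w hwW⟩
    set p := V₄.dualAnnihilator with hpdef
    have hp : Module.finrank ℂ p = 1 := ann_rank V₄ h4
    have hx : OmL v₀ ∈ p := (Submodule.mem_dualAnnihilator _).2 fun w hw => (key w hw).1
    have hx' : OmL' v₀ ∈ p := (Submodule.mem_dualAnnihilator _).2 fun w hw => (key w hw).2.1
    have hx'' : OmL'' v₀ ∈ p := (Submodule.mem_dualAnnihilator _).2 fun w hw => (key w hw).2.2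
    have m2 := minor_eq p hp.le hx' hx'' ![1,0,0,0,0] ![0,0,0,0,1]
    have m3 := minor_eq p hp.le hx hx' ![1,0,0,0,0] ![0,1,0,0,0]
    have m0 := minor_eq p hp.le hx hx'' ![0,0,1,0,0] ![0,0,0,1,0]
    have m1 := minor_eq p hp.le hx hx' ![0,0,1,0,0] ![0,0,0,1,0]
    have m4 := minor_eq p hp.le hx' hx'' ![0,1,0,0,0] ![0,0,1,0,0]
    simp only [OmL_apply, OmL'_apply, OmL''_apply, Om, Om', Om'',
      Matrix.cons_val_zero, Matrix.cons_val_one, Matrix.head_cons,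
      Matrix.cons_val_two, Matrix.tail_cons, Matrix.cons_val_three,
      Matrix.cons_val_four] at m0 m1 m2 m3 m4
    have h2 : v₀ 2 = 0 := mul_self_eq_zero.1 (by linear_combination m2)
    have h3 : v₀ 3 = 0 := mul_self_eq_zero.1 (by linear_combination -m3)
    have h0 : v₀ 0 = 0 := mul_self_eq_zero.1 (by linear_combination -m0)
    have h1' : v₀ 1 = 0 := mul_self_eq_zero.1 (by linear_combination m1 - v₀ 4 * h0)
    have h4' : v₀ 4 = 0 := mul_self_eq_zero.1 (by linear_combination m4 - v₀ 0 * h3)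
    exact hv₀ (by funext i; fin_cases i <;> assumption)
  · rintro ⟨V₃, h3, hOm, hOm', hOm''⟩
    have he4 : (![0,0,0,0,1] : Fin 5 → ℂ) ∈ V₃ := by
      refine radical_mem OmL ![0,0,0,0,1] ?_ ?_ ?_ V₃ h3 hOm
      · ext b; simp [Om]
      · intro a; simp [Om]
      · intro a ha
        have h0 := LinearMap.congr_fun ha ![(1:ℂ),0,0,0,0]
        have h1 := LinearMap.congr_fun ha ![(0:ℂ),1,0,0,0]
        have h2 := LinearMap.congr_fun ha ![(0:ℂ),0,1,0,0]
        have h3 := LinearMap.congr_fun ha ![(0:ℂ),0,0,1,0]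
        simp [Om] at h0 h1 h2 h3
        refine Submodule.mem_span_singleton.2 ⟨a 4, ?_⟩
        funext i; fin_cases i <;>
          simp_all [Matrix.cons_val_zero, Matrix.cons_val_one]
    have he0 : (![1,0,0,0,0] : Fin 5 → ℂ) ∈ V₃ := by
      refine radical_mem OmL' ![1,0,0,0,0] ?_ ?_ ?_ V₃ h3 hOm'
      · ext b; simp [Om']
      · intro a; simp [Om']
      · intro a ha
        have h1 := LinearMap.congr_fun ha ![(0:ℂ),1,0,0,0]
        have h2 := LinearMap.congr_fun ha ![(0:ℂ),0,1,0,0]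
        have h3 := LinearMap.congr_fun ha ![(0:ℂ),0,0,1,0]
        have h4 := LinearMap.congr_fun ha ![(0:ℂ),0,0,0,1]
        simp [Om'] at h1 h2 h3 h4
        refine Submodule.mem_span_singleton.2 ⟨a 0, ?_⟩
        funext i; fin_cases i <;>
          simp_all [Matrix.cons_val_zero, Matrix.cons_val_one]
    have he3 : (![0,0,0,1,0] : Fin 5 → ℂ) ∈ V₃ := by
      refine radical_mem OmL'' ![0,0,0,1,0] ?_ ?_ ?_ V₃ h3 hOm''
      · ext b; simp [Om'']
      · intro a; simp [Om'']
      · intro a ha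
        have h0 := LinearMap.congr_fun ha ![(1:ℂ),0,0,0,0]
        have h1 := LinearMap.congr_fun ha ![(0:ℂ),1,0,0,0]
        have h2 := LinearMap.congr_fun ha ![(0:ℂ),0,1,0,0]
        have h4 := LinearMap.congr_fun ha ![(0:ℂ),0,0,0,1]
        simp [Om''] at h0 h1 h2 h4
        refine Submodule.mem_span_singleton.2 ⟨a 3, ?_⟩
        funext i; fin_cases i <;>
          simp_all [Matrix.cons_val_zero, Matrix.cons_val_one]
    have := hOm _ he0 _ he3
    simp [Om] at this
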